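/- arXiv:2510.00598 — 3 statements merged into one kernel-verified Lean document; each statement's English description precedes it below -/
import Mathlib

section
/- For every s ∈ (0,1), ∫₀¹ g(s,t)² / m(t) dt = −[ s² log s + (1−s)² log(1−s) + m(s) ], which is the function h_wls(s) appearing in the limit covariance kernel for the heteroscedasticity-weighted least squares version of the test. -/
/-- `m(s) = s(1-s)`. -/
noncomputable def m (s : ℝ) : ℝ := s * (1 - s)

/-- `g(s,t) = min(s,t)·(1 - max(s,t))`. -/
noncomputable def g (s t : ℝ) : ℝ := min s t * (1 - max s t)

/-!
On `[0, s]` the integrand is `(1 - s)² · t/(1 - t)`, whose primitive is `-(1 - s)² (log(1 - t) + t)`.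
The reflection `t ↦ 1 - t` fixes `m` and maps `g s` to `g (1 - s)`, so the integral over `[s, 1]`
is the integral over `[0, 1 - s]` with `s` replaced by `1 - s`. Adding the two pieces, the
non-logarithmic terms combine to `-s(1 - s)`.
-/

open Real intervalIntegral

lemma m_one_sub (t : ℝ) : m (1 - t) = m t := by
  simp only [m]; ring

lemma g_one_sub_one_sub (s t : ℝ) : g (1 - s) (1 - t) = g s t := by
  simp only [g, min_sub_sub_left, max_sub_sub_left, sub_sub_cancel]
  ring

lemma g_sq_div_m_of_le {s t : ℝ} (hts : t ≤ s) (ht : t < 1) :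
    g s t ^ 2 / m t = (1 - s) ^ 2 * (t / (1 - t)) := by
  rcases eq_or_ne t 0 with rfl | ht0
  · simp [g, m]
  · have h1t : 1 - t ≠ 0 := by linarith
    simp only [g, m, min_eq_right hts, max_eq_left hts]
    field_simp

lemma one_sub_ne_zero_of_mem_uIcc {a t : ℝ} (ha : a < 1) (ht : t ∈ Set.uIcc 0 a) :
    1 - t ≠ 0 :=
  (sub_pos.2 (ht.2.trans_lt (max_lt one_pos ha))).ne'

lemma continuousOn_div_one_sub {a : ℝ} (ha : a < 1) :
    ContinuousOn (fun t : ℝ ↦ t / (1 - t)) (Set.uIcc 0 a) :=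
  continuousOn_id.div (continuousOn_const.sub continuousOn_id)
    fun _ ht ↦ one_sub_ne_zero_of_mem_uIcc ha ht

lemma hasDerivAt_neg_log_one_sub_sub {t : ℝ} (ht : 1 - t ≠ 0) :
    HasDerivAt (fun t ↦ -log (1 - t) - t) (t / (1 - t)) t := by
  refine ((((hasDerivAt_id' t).const_sub 1).log ht).neg.sub (hasDerivAt_id' t)).congr_deriv ?_
  field_simp
  ring

lemma integral_div_one_sub {a : ℝ} (ha : a < 1) :
    ∫ t in (0 : ℝ)..a, t / (1 - t) = -log (1 - a) - a := by
  rw [integral_eq_sub_of_hasDerivAt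
    (fun _ ht ↦ hasDerivAt_neg_log_one_sub_sub (one_sub_ne_zero_of_mem_uIcc ha ht))
    (continuousOn_div_one_sub ha).intervalIntegrable]
  simp

lemma eqOn_g_sq_div_m_left {s : ℝ} (hs0 : 0 ≤ s) (hs1 : s < 1) :
    Set.EqOn (fun t ↦ g s t ^ 2 / m t) (fun t ↦ (1 - s) ^ 2 * (t / (1 - t))) (Set.uIcc 0 s) := by
  intro t ht
  rw [Set.uIcc_of_le hs0] at ht
  exact g_sq_div_m_of_le ht.2 (ht.2.trans_lt hs1)

lemma intervalIntegrable_g_sq_div_m_left {s : ℝ} (hs0 : 0 ≤ s) (hs1 : s < 1) :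
    IntervalIntegrable (fun t ↦ g s t ^ 2 / m t) MeasureTheory.volume 0 s :=
  ((continuousOn_const.mul (continuousOn_div_one_sub hs1)).congr
    (eqOn_g_sq_div_m_left hs0 hs1)).intervalIntegrable

lemma integral_g_sq_div_m_left {s : ℝ} (hs0 : 0 ≤ s) (hs1 : s < 1) :
    ∫ t in (0 : ℝ)..s, g s t ^ 2 / m t = (1 - s) ^ 2 * (-log (1 - s) - s) := by
  rw [integral_congr (eqOn_g_sq_div_m_left hs0 hs1), integral_const_mul,
    integral_div_one_sub hs1]

lemma intervalIntegrable_g_sq_div_m_right {s : ℝ} (hs0 : 0 < s) (hs1 : s ≤ 1) :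
    IntervalIntegrable (fun t ↦ g s t ^ 2 / m t) MeasureTheory.volume s 1 := by
  have := (intervalIntegrable_g_sq_div_m_left (sub_nonneg.2 hs1) (by linarith)).comp_sub_left 1
  simp only [sub_zero, sub_sub_cancel, g_one_sub_one_sub, m_one_sub] at this
  exact this.symm

lemma integral_g_sq_div_m_right {s : ℝ} (hs0 : 0 < s) (hs1 : s ≤ 1) :
    ∫ t in s..(1 : ℝ), g s t ^ 2 / m t = s ^ 2 * (-log s - (1 - s)) := by
  calc ∫ t in s..(1 : ℝ), g s t ^ 2 / m t
      = ∫ t in s..(1 : ℝ), g (1 - s) (1 - t) ^ 2 / m (1 - t) := by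
        simp only [g_one_sub_one_sub, m_one_sub]
    _ = ∫ t in (0 : ℝ)..1 - s, g (1 - s) t ^ 2 / m t := by
        rw [integral_comp_sub_left (fun t ↦ g (1 - s) t ^ 2 / m t), sub_self]
    _ = s ^ 2 * (-log s - (1 - s)) := by
        rw [integral_g_sq_div_m_left (sub_nonneg.2 hs1) (by linarith), sub_sub_cancel]

/-- For every `s ∈ (0,1)`,
`∫₀¹ g(s,t)²/m(t) dt = -[s² log s + (1-s)² log(1-s) + m(s)]`. -/
theorem stmt4 (s : ℝ) (hs : s ∈ Set.Ioo (0 : ℝ) 1) :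
    ∫ t in (0 : ℝ)..1, (g s t) ^ 2 / m t
      = -(s ^ 2 * Real.log s + (1 - s) ^ 2 * Real.log (1 - s) + m s) := by
  obtain ⟨hs0, hs1⟩ := hs
  rw [← integral_add_adjacent_intervals (intervalIntegrable_g_sq_div_m_left hs0.le hs1)
      (intervalIntegrable_g_sq_div_m_right hs0 hs1.le),
    integral_g_sq_div_m_left hs0.le hs1, integral_g_sq_div_m_right hs0 hs1.le, m]
  ring
end

section
/- Fix s ∈ (0,1). As T → ∞ over the integers, ( Σ_{k=1}^{T−1} m(k/T)² )^{−1} · Σ_{k=1}^{T−1} g(⌊Ts⌋/T, k/T)² · m(k/T) converges to (3/2) · m(s)² · (1 + 2m(s)). That is, for ordinary least squares weights w_k ≡ 1, the quantity h_T(s; w) converges to h_ols(s) = (3/2) m(s)² (1 + 2m(s)). -/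
open Filter Topology Finset

lemma g_of_le {s t : ℝ} (h : t ≤ s) : g s t = t * (1 - s) := by
  rw [g, min_eq_right h, max_eq_left h]

lemma g_of_ge {s t : ℝ} (h : s ≤ t) : g s t = s * (1 - t) := by
  rw [g, min_eq_left h, max_eq_right h]

lemma sum_Icc_one_sub_one_eq_sum_range {M : Type*} [AddCommMonoid M] {f : ℕ → M} (hf : f 0 = 0)
    (n : ℕ) : ∑ k ∈ Icc 1 (n - 1), f k = ∑ k ∈ range n, f k := by
  rcases n with _ | n
  · simp
  · rw [sum_range_succ', hf, add_zero, ← Ico_add_one_right_eq_Icc, sum_Ico_eq_sum_range]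
    simp [add_comm]

lemma mul_sum_range_eq_sub_of_step {f P : ℝ → ℝ} {u : ℝ} (hP : ∀ y, P (y + u) - P y = u * f y)
    (n : ℕ) : u * ∑ k ∈ range n, f (k * u) = P (n * u) - P 0 := by
  have := sum_range_sub (fun k : ℕ => P (k * u)) n
  simp only [Nat.cast_add, Nat.cast_one, add_mul, one_mul, hP, Nat.cast_zero, zero_mul] at this
  rw [mul_sum, this]

/- Discrete primitives with step `u` of `t² m t`, `(1 - t)² m t` and `m t ^ 2`; at `u = 0` they
are the primitives `y ↦ ∫₀^y`. -/
noncomputable def primSqMulM (u y : ℝ) : ℝ :=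
  y ^ 4 / 4 - y ^ 5 / 5 + u * (y ^ 4 / 2 - y ^ 3 / 2) + u ^ 2 * (y ^ 2 / 4 - y ^ 3 / 3)
    + u ^ 4 * y / 30

noncomputable def primOneSubSqMulM (u y : ℝ) : ℝ :=
  y ^ 2 / 2 - y ^ 3 + 3 * y ^ 4 / 4 - y ^ 5 / 5
    + u * (-y / 2 + 3 * y ^ 2 / 2 - 3 * y ^ 3 / 2 + y ^ 4 / 2)
    + u ^ 2 * (-y / 2 + 3 * y ^ 2 / 4 - y ^ 3 / 3) + u ^ 4 * y / 30

noncomputable def primMSq (u y : ℝ) : ℝ :=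
  y ^ 3 / 3 - y ^ 4 / 2 + y ^ 5 / 5 + u * (-y ^ 2 / 2 + y ^ 3 - y ^ 4 / 2)
    + u ^ 2 * (y / 6 - y ^ 2 / 2 + y ^ 3 / 3) - u ^ 4 * y / 30

lemma primSqMulM_step (u y : ℝ) : primSqMulM u (y + u) - primSqMulM u y = u * (y ^ 2 * m y) := by
  unfold primSqMulM m; ring

lemma primOneSubSqMulM_step (u y : ℝ) :
    primOneSubSqMulM u (y + u) - primOneSubSqMulM u y = u * ((1 - y) ^ 2 * m y) := by
  unfold primOneSubSqMulM m; ring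

lemma primMSq_step (u y : ℝ) : primMSq u (y + u) - primMSq u y = u * m y ^ 2 := by
  unfold primMSq m; ring

noncomputable def olsNumerator (u x : ℝ) : ℝ :=
  (1 - x) ^ 2 * primSqMulM u (x + u) + x ^ 2 * (primOneSubSqMulM u 1 - primOneSubSqMulM u (x + u))

lemma inv_mul_sum_m_sq {T : ℕ} (hT : T ≠ 0) :
    (T : ℝ)⁻¹ * ∑ k ∈ range T, m ((k : ℝ) / T) ^ 2 = primMSq (T : ℝ)⁻¹ 1 := by
  simp only [div_eq_mul_inv]
  rw [mul_sum_range_eq_sub_of_step (primMSq_step _), mul_inv_cancel₀ (by exact_mod_cast hT)]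
  simp [primMSq]

lemma inv_mul_sum_g_sq_mul_m {K T : ℕ} (hKT : K < T) :
    (T : ℝ)⁻¹ * ∑ k ∈ range T, g ((K : ℝ) / T) ((k : ℝ) / T) ^ 2 * m ((k : ℝ) / T)
      = olsNumerator (T : ℝ)⁻¹ ((K : ℝ) / T) := by
  set u := (T : ℝ)⁻¹
  set x := (K : ℝ) / T
  have hx : x = K * u := div_eq_mul_inv _ _
  have hTu : (T : ℝ) * u = 1 := mul_inv_cancel₀ (by exact_mod_cast hKT.ne_bot)
  have hKu : ((K + 1 : ℕ) : ℝ) * u = x + u := by push_cast; rw [hx]; ring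
  simp only [div_eq_mul_inv]
  have hlow : ∑ k ∈ range (K + 1), g x (k * u) ^ 2 * m (k * u)
      = (1 - x) ^ 2 * ∑ k ∈ range (K + 1), (k * u) ^ 2 * m (k * u) := by
    rw [mul_sum]
    refine sum_congr rfl fun k hk => ?_
    have : (k : ℝ) * u ≤ x := by
      rw [hx]; gcongr; exact_mod_cast Nat.lt_succ_iff.mp (mem_range.mp hk)
    rw [g_of_le this]; ring
  have hhigh : ∑ k ∈ Ico (K + 1) T, g x (k * u) ^ 2 * m (k * u)
      = x ^ 2 * (∑ k ∈ range T, (1 - k * u) ^ 2 * m (k * u)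
          - ∑ k ∈ range (K + 1), (1 - k * u) ^ 2 * m (k * u)) := by
    rw [← sum_Ico_eq_sub _ hKT, mul_sum]
    refine sum_congr rfl fun k hk => ?_
    have : x ≤ (k : ℝ) * u := by
      rw [hx]; gcongr; exact_mod_cast (Nat.le_succ K).trans (mem_Ico.mp hk).1
    rw [g_of_ge this]; ring
  rw [← sum_range_add_sum_Ico _ hKT, hlow, hhigh, mul_add, mul_left_comm, mul_left_comm u (x ^ 2),
    mul_sub, mul_sum_range_eq_sub_of_step (primSqMulM_step _),
    mul_sum_range_eq_sub_of_step (primOneSubSqMulM_step _),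
    mul_sum_range_eq_sub_of_step (primOneSubSqMulM_step _), hTu, hKu, olsNumerator]
  simp [primSqMulM, primOneSubSqMulM]

lemma continuous_olsNumerator : Continuous (Function.uncurry olsNumerator) := by
  unfold Function.uncurry olsNumerator primSqMulM primOneSubSqMulM; fun_prop

lemma continuous_primMSq : Continuous (Function.uncurry primMSq) := by
  unfold Function.uncurry primMSq; fun_prop

lemma tendsto_olsNumerator_div_primMSq {x : ℕ → ℝ} {s : ℝ} (hx : Tendsto x atTop (𝓝 s)) :
    Tendsto (fun T : ℕ => olsNumerator (T : ℝ)⁻¹ (x T) / primMSq (T : ℝ)⁻¹ 1) atTop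
      (𝓝 (olsNumerator 0 s / primMSq 0 1)) := by
  have hu := tendsto_inv_atTop_nhds_zero_nat (𝕜 := ℝ)
  have hnum := (continuous_olsNumerator.tendsto (0, s)).comp (hu.prodMk_nhds hx)
  have hden := (continuous_primMSq.tendsto (0, 1)).comp (hu.prodMk_nhds tendsto_const_nhds)
  exact hnum.div hden (by norm_num [primMSq])

lemma olsNumerator_zero_div_primMSq_zero (s : ℝ) :
    olsNumerator 0 s / primMSq 0 1 = 3 / 2 * m s ^ 2 * (1 + 2 * m s) := by
  norm_num [olsNumerator, primSqMulM, primOneSubSqMulM, primMSq, m]; ring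

lemma ratio_eq_olsNumerator_div_primMSq {K T : ℕ} (hKT : K < T) :
    (∑ k ∈ Icc 1 (T - 1), m ((k : ℝ) / T) ^ 2)⁻¹ *
        ∑ k ∈ Icc 1 (T - 1), g ((K : ℝ) / T) ((k : ℝ) / T) ^ 2 * m ((k : ℝ) / T)
      = olsNumerator (T : ℝ)⁻¹ ((K : ℝ) / T) / primMSq (T : ℝ)⁻¹ 1 := by
  have hu : (T : ℝ)⁻¹ ≠ 0 := inv_ne_zero (by exact_mod_cast hKT.ne_bot)
  rw [sum_Icc_one_sub_one_eq_sum_range (by simp [m]),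
    sum_Icc_one_sub_one_eq_sum_range (by simp [m]), ← inv_mul_sum_g_sq_mul_m hKT, ← inv_mul_sum_m_sq hKT.ne_bot, mul_div_mul_left _ _ hu,
    inv_mul_eq_div]

/-- Fix `s ∈ (0,1)`. For ordinary least squares weights `w ≡ 1`,
`h_T(s; w)` converges to `h_ols(s) = (3/2) m(s)² (1 + 2 m(s))` as `T → ∞`. -/
theorem stmt7 (s : ℝ) (hs : s ∈ Set.Ioo (0 : ℝ) 1) :
    Filter.Tendsto
      (fun T : ℕ =>
        (∑ k ∈ Finset.Icc 1 (T - 1), (m ((k : ℝ) / T)) ^ 2)⁻¹ *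
          ∑ k ∈ Finset.Icc 1 (T - 1),
            (g ((⌊(T : ℝ) * s⌋ : ℝ) / T) ((k : ℝ) / T)) ^ 2 * m ((k : ℝ) / T))
      Filter.atTop (nhds ((3 / 2) * (m s) ^ 2 * (1 + 2 * m s))) := by
  obtain ⟨hs0, hs1⟩ := hs
  have hfloor : Tendsto (fun T : ℕ => (⌊(T : ℝ) * s⌋₊ : ℝ) / T) atTop (𝓝 s) := by
    simpa only [mul_comm, Function.comp_def] using
      (tendsto_nat_floor_mul_div_atTop hs0.le).comp tendsto_natCast_atTop_atTop
  have hlim := tendsto_olsNumerator_div_primMSq hfloor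
  rw [olsNumerator_zero_div_primMSq_zero] at hlim
  refine hlim.congr' ((eventually_ge_atTop 1).mono fun T hT => ?_)
  have hTs : 0 ≤ (T : ℝ) * s := by positivity
  have hKT : ⌊(T : ℝ) * s⌋₊ < T := by
    rw [Nat.floor_lt hTs]
    exact mul_lt_of_lt_one_right (by exact_mod_cast hT) hs1
  dsimp only
  rw [← natCast_floor_eq_intCast_floor hTs, ratio_eq_olsNumerator_div_primMSq hKT]
end

section
/- Let N ≥ 1 and T ≥ 2 be integers and consider panel data Y_{i,t} = μ_i + e_{i,t}, i = 1,…,N, t = 1,…,T (no change in the mean), where each μ_i is a real constant and, for each i, the random variables e_{i,1},…,e_{i,T} are independent, square-integrable, with mean 0 and variance σ_i². Let w_1,…,w_{T−1} be nonnegative weights, not all zero, and let σ̂²_{N,T}(w) = ( Σ_{k=1}^{T−1} m_T(k/T)² w_k )^{−1} · Σ_{k=1}^{T−1} m_T(k/T) w_k · z̄_k, where z̄_k = N^{−1} Σ_{i=1}^N Z_i(k/T)² and Z_i is the CUSUM process of panel i. Then E[ σ̂²_{N,T}(w) ] = N^{−1} Σ_{i=1}^N σ_i², i.e., the weighted least squares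 estimator is an exactly unbiased estimator of the mean variance σ̄_N² under the null hypothesis of no change. -/
/-!
At a grid point `k/T` the CUSUM process does not see the panel mean `μ_i`: it is the fixed linear
combination `∑_t c_t e_{i,t}` with `c_t = T^{-1/2} (1{t ≤ k} - k/T)`, and `∑_t c_t² = m(k/T)`.
Independence kills the cross terms, so `E Z_i(k/T)² = m(k/T) σ_i²` and `E z̄_k = m(k/T) σ̄²_N`.
The estimator is the weighted least squares slope of `z̄_k` on `m(k/T)`, so its expectation is
`(∑_k m(k/T)² w_k)⁻¹ ∑_k m(k/T) w_k · m(k/T) σ̄²_N = σ̄²_N`.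
-/

open MeasureTheory ProbabilityTheory

/-- CUSUM process of the data `Y 1, …, Y T`:
`Z(s) = T^{-1/2} ∑_{k=1}^{⌊Ts⌋} (Y k - Ȳ_T)`. -/
noncomputable def cusum (T : ℕ) (Y : ℕ → ℝ) (s : ℝ) : ℝ :=
  (Real.sqrt T)⁻¹ * ∑ k ∈ Finset.Icc 1 (⌊(T : ℝ) * s⌋.toNat),
    (Y k - (T : ℝ)⁻¹ * ∑ t ∈ Finset.Icc 1 T, Y t)

open Finset

lemma cusum_const_add (T : ℕ) (Y : ℕ → ℝ) (a s : ℝ) :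
    cusum T (fun t => a + Y t) s = cusum T Y s := by
  rcases eq_or_ne T 0 with rfl | hT
  · simp [cusum]
  refine congrArg _ (sum_congr rfl fun _ _ => ?_)
  rw [sum_add_distrib, sum_const, Nat.card_Icc, nsmul_eq_mul, Nat.add_sub_cancel]
  field_simp
  ring

lemma sum_Icc_ite_le {M : Type*} [AddCommMonoid M] {k T : ℕ} (hk : k ≤ T) (f : ℕ → M) :
    ∑ t ∈ Icc 1 T, (if t ≤ k then f t else 0) = ∑ t ∈ Icc 1 k, f t := by
  rw [← sum_filter]
  congr 1
  ext t
  simp only [mem_filter, mem_Icc]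
  omega

noncomputable def cusumWeight (T k t : ℕ) : ℝ :=
  (Real.sqrt T)⁻¹ * ((if t ≤ k then 1 else 0) - k / T)

lemma cusum_natCast_div (Y : ℕ → ℝ) {k T : ℕ} (hk : k ≤ T) :
    cusum T Y (k / T) = ∑ t ∈ Icc 1 T, cusumWeight T k t * Y t := by
  rcases eq_or_ne T 0 with rfl | hT
  · simp [cusum]
  have hfloor : ⌊(T : ℝ) * (k / T)⌋.toNat = k := by
    rw [mul_div_cancel₀ _ (Nat.cast_ne_zero.mpr hT), Int.floor_natCast, Int.toNat_natCast]
  simp only [cusum, cusumWeight, hfloor, mul_assoc, ← mul_sum, sub_mul, ite_mul, one_mul,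
    zero_mul, sum_sub_distrib, sum_Icc_ite_le hk, sum_const, Nat.card_Icc, Nat.add_sub_cancel,
    nsmul_eq_mul]
  ring

lemma sum_cusumWeight_sq {k T : ℕ} (hk : k ≤ T) :
    ∑ t ∈ Icc 1 T, cusumWeight T k t ^ 2 = m (k / T) := by
  rcases eq_or_ne T 0 with rfl | hT
  · simp [m]
  have hsq : ∀ t, cusumWeight T k t ^ 2
      = (T : ℝ)⁻¹ * ((if t ≤ k then 1 - 2 * ((k : ℝ) / T) else 0) + (k / T) ^ 2) := by
    intro t
    rw [cusumWeight, mul_pow, inv_pow, Real.sq_sqrt (Nat.cast_nonneg T)]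
    split_ifs <;> ring
  simp only [hsq, ← mul_sum, sum_add_distrib, sum_Icc_ite_le hk, sum_const, Nat.card_Icc,
    Nat.add_sub_cancel, nsmul_eq_mul, m]
  field_simp
  ring

lemma m_natCast_div_pos {k T : ℕ} (hk : 0 < k) (hkT : k < T) : 0 < m (k / T) := by
  have hT : (0 : ℝ) < T := by exact_mod_cast hk.trans hkT
  refine mul_pos (by positivity) (sub_pos.mpr ((div_lt_one hT).mpr ?_))
  exact_mod_cast hkT

section Moments

variable {Ω : Type*} [MeasurableSpace Ω] {P : Measure Ω}

lemma integrable_cusum_natCast_div_sq {X : ℕ → Ω → ℝ} {T k : ℕ} (hk : k ≤ T)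
    (hX : ∀ t ∈ Icc 1 T, MemLp (X t) 2 P) :
    Integrable (fun ω => cusum T (fun t => X t ω) (k / T) ^ 2) P := by
  simp_rw [cusum_natCast_div _ hk]
  exact (memLp_finsetSum _ fun t ht => (hX t ht).const_mul _).integrable_sq

lemma integrable_sum_cusum_natCast_div_sq {ι : Type*} (s : Finset ι) {X : ι → ℕ → Ω → ℝ}
    {T k : ℕ} (hk : k ≤ T) (hX : ∀ i ∈ s, ∀ t ∈ Icc 1 T, MemLp (X i t) 2 P) :
    Integrable (fun ω => ∑ i ∈ s, cusum T (fun t => X i t ω) (k / T) ^ 2) P :=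
  integrable_finsetSum _ fun i hi => integrable_cusum_natCast_div_sq hk (hX i hi)

variable [IsProbabilityMeasure P]

lemma integral_sq_sum_mul_of_pairwise_indepFun {ι : Type*} {s : Finset ι} {X : ι → Ω → ℝ}
    (c : ι → ℝ) (hX : ∀ i ∈ s, MemLp (X i) 2 P) (hmean : ∀ i ∈ s, P[X i] = 0)
    (hindep : Set.Pairwise s fun i j => X i ⟂ᵢ[P] X j) :
    ∫ ω, (∑ i ∈ s, c i * X i ω) ^ 2 ∂P = ∑ i ∈ s, c i ^ 2 * ∫ ω, X i ω ^ 2 ∂P := by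
  have hcX : ∀ i ∈ s, MemLp (fun ω => c i * X i ω) 2 P := fun i hi => (hX i hi).const_mul (c i)
  have hsum : (fun ω => ∑ i ∈ s, c i * X i ω) = ∑ i ∈ s, fun ω => c i * X i ω := by
    ext ω; simp
  have hsum_mean : P[fun ω => ∑ i ∈ s, c i * X i ω] = 0 := by
    rw [integral_finsetSum _ fun i hi => (hcX i hi).integrable one_le_two]
    exact sum_eq_zero fun i hi => by rw [integral_const_mul, hmean i hi, mul_zero]
  rw [← variance_of_integral_eq_zero (memLp_finsetSum s hcX).aemeasurable hsum_mean, hsum,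
    IndepFun.variance_sum hcX fun i hi j hj hij =>
      (hindep hi hj hij).comp (measurable_const_mul (c i)) (measurable_const_mul (c j))]
  refine sum_congr rfl fun i hi => ?_
  rw [variance_const_mul, variance_of_integral_eq_zero (hX i hi).aemeasurable (hmean i hi)]

lemma integral_cusum_natCast_div_sq {X : ℕ → Ω → ℝ} {T k : ℕ} (hk : k ≤ T) {v : ℝ}
    (hindep : iIndepFun (fun t : Icc 1 T => X t) P)
    (hX : ∀ t ∈ Icc 1 T, MemLp (X t) 2 P) (hmean : ∀ t ∈ Icc 1 T, P[X t] = 0)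
    (hvar : ∀ t ∈ Icc 1 T, ∫ ω, X t ω ^ 2 ∂P = v) :
    ∫ ω, cusum T (fun t => X t ω) (k / T) ^ 2 ∂P = m (k / T) * v := by
  have hpair : Set.Pairwise (Icc 1 T : Set ℕ) fun s t => X s ⟂ᵢ[P] X t :=
    fun s hs t ht hst => hindep.indepFun (i := ⟨s, hs⟩) (j := ⟨t, ht⟩) (by simpa using hst)
  simp_rw [cusum_natCast_div _ hk]
  rw [integral_sq_sum_mul_of_pairwise_indepFun _ hX hmean hpair,
    sum_congr rfl fun t ht => by rw [hvar t ht], ← sum_mul, sum_cusumWeight_sq hk]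

lemma integral_sum_cusum_natCast_div_sq {ι : Type*} (s : Finset ι) {X : ι → ℕ → Ω → ℝ}
    {T k : ℕ} (hk : k ≤ T) {v : ι → ℝ}
    (hindep : ∀ i ∈ s, iIndepFun (fun t : Icc 1 T => X i t) P)
    (hX : ∀ i ∈ s, ∀ t ∈ Icc 1 T, MemLp (X i t) 2 P)
    (hmean : ∀ i ∈ s, ∀ t ∈ Icc 1 T, P[X i t] = 0)
    (hvar : ∀ i ∈ s, ∀ t ∈ Icc 1 T, ∫ ω, X i t ω ^ 2 ∂P = v i) :
    ∫ ω, ∑ i ∈ s, cusum T (fun t => X i t ω) (k / T) ^ 2 ∂P = m (k / T) * ∑ i ∈ s, v i := by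
  rw [integral_finsetSum _ fun i hi => integrable_cusum_natCast_div_sq hk (hX i hi), mul_sum]
  exact sum_congr rfl fun i hi =>
    integral_cusum_natCast_div_sq hk (hindep i hi) (hX i hi) (hmean i hi) (hvar i hi)

end Moments

theorem stmt15_general {Ω : Type*} [MeasurableSpace Ω] (P : Measure Ω) [IsProbabilityMeasure P]
    (N T : ℕ)
    (μ : ℕ → ℝ) (σ2 : ℕ → ℝ) (e : ℕ → ℕ → Ω → ℝ)
    (hindep : ∀ i ∈ Finset.Icc 1 N,
      iIndepFun (fun k : (Finset.Icc 1 T) => e i (k : ℕ)) P)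
    (hL2 : ∀ i ∈ Finset.Icc 1 N, ∀ t ∈ Finset.Icc 1 T, MemLp (e i t) 2 P)
    (hmean : ∀ i ∈ Finset.Icc 1 N, ∀ t ∈ Finset.Icc 1 T, ∫ ω, e i t ω ∂P = 0)
    (hvar : ∀ i ∈ Finset.Icc 1 N, ∀ t ∈ Finset.Icc 1 T, ∫ ω, (e i t ω) ^ 2 ∂P = σ2 i)
    (Y : ℕ → ℕ → Ω → ℝ) (hY : ∀ i t ω, Y i t ω = μ i + e i t ω)
    (w : ℕ → ℝ) (hw : ∀ k ∈ Finset.Icc 1 (T - 1), 0 ≤ w k)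
    (hw0 : ∃ k ∈ Finset.Icc 1 (T - 1), w k ≠ 0)
    (σhat : Ω → ℝ)
    (hσhat : ∀ ω, σhat ω = (∑ k ∈ Finset.Icc 1 (T - 1), (m ((k : ℝ) / T)) ^ 2 * w k)⁻¹ *
      ∑ k ∈ Finset.Icc 1 (T - 1), m ((k : ℝ) / T) * w k *
        ((N : ℝ)⁻¹ * ∑ i ∈ Finset.Icc 1 N,
          (cusum T (fun t => Y i t ω) ((k : ℝ) / T)) ^ 2)) :
    ∫ ω, σhat ω ∂P = (N : ℝ)⁻¹ * ∑ i ∈ Finset.Icc 1 N, σ2 i := by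
  simp only [hY, cusum_const_add] at hσhat
  have hkT : ∀ k ∈ Icc 1 (T - 1), 0 < k ∧ k < T := fun k hk => by grind
  set C := ∑ k ∈ Icc 1 (T - 1), m (k / T) ^ 2 * w k
  set σbar := (N : ℝ)⁻¹ * ∑ i ∈ Icc 1 N, σ2 i
  have hC : 0 < C := by
    obtain ⟨k, hk, hwk⟩ := hw0
    refine sum_pos' (fun j hj => mul_nonneg (sq_nonneg _) (hw j hj)) ⟨k, hk, mul_pos ?_ ?_⟩
    · exact pow_pos (m_natCast_div_pos (hkT k hk).1 (hkT k hk).2) 2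
    · exact (hw k hk).lt_of_ne hwk.symm
  calc ∫ ω, σhat ω ∂P
      = C⁻¹ * ∑ k ∈ Icc 1 (T - 1), m (k / T) * w k * (m (k / T) * σbar) := by
        rw [integral_congr_ae (.of_forall hσhat), integral_const_mul,
          integral_finsetSum _ fun k hk => ((integrable_sum_cusum_natCast_div_sq _
            (hkT k hk).2.le hL2).const_mul _).const_mul _]
        refine congrArg _ (sum_congr rfl fun k hk => ?_)
        rw [integral_const_mul, integral_const_mul,
          integral_sum_cusum_natCast_div_sq _ (hkT k hk).2.le hindep hL2 hmean hvar]
        exact congrArg _ (mul_left_comm _ _ _)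
    _ = C⁻¹ * (C * σbar) := by
        rw [sum_mul]
        exact congrArg _ (sum_congr rfl fun k _ => by ring)
    _ = σbar := inv_mul_cancel_left₀ hC.ne' σbar

/-- Under the null hypothesis of no change (panel data
`Y i t = μ i + e i t` with, for each panel `i`, independent square-integrable
mean-zero errors of variance `σ_i²`), the weighted least squares estimator
`σ̂²_{N,T}(w)` is exactly unbiased for the mean variance `N⁻¹ ∑ σ_i²`. -/
theorem stmt15 {Ω : Type*} [MeasurableSpace Ω] (P : Measure Ω) [IsProbabilityMeasure P]
    (N T : ℕ) (hN : 1 ≤ N) (hT : 2 ≤ T)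
    (μ : ℕ → ℝ) (σ2 : ℕ → ℝ) (e : ℕ → ℕ → Ω → ℝ)
    (hmeas : ∀ i t, Measurable (e i t))
    (hindep : ∀ i ∈ Finset.Icc 1 N,
      iIndepFun (fun k : (Finset.Icc 1 T) => e i (k : ℕ)) P)
    (hL2 : ∀ i ∈ Finset.Icc 1 N, ∀ t ∈ Finset.Icc 1 T, MemLp (e i t) 2 P)
    (hmean : ∀ i ∈ Finset.Icc 1 N, ∀ t ∈ Finset.Icc 1 T, ∫ ω, e i t ω ∂P = 0)
    (hvar : ∀ i ∈ Finset.Icc 1 N, ∀ t ∈ Finset.Icc 1 T, ∫ ω, (e i t ω) ^ 2 ∂P = σ2 i)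
    (Y : ℕ → ℕ → Ω → ℝ) (hY : ∀ i t ω, Y i t ω = μ i + e i t ω)
    (w : ℕ → ℝ) (hw : ∀ k ∈ Finset.Icc 1 (T - 1), 0 ≤ w k)
    (hw0 : ∃ k ∈ Finset.Icc 1 (T - 1), w k ≠ 0)
    (σhat : Ω → ℝ)
    (hσhat : ∀ ω, σhat ω = (∑ k ∈ Finset.Icc 1 (T - 1), (m ((k : ℝ) / T)) ^ 2 * w k)⁻¹ *
      ∑ k ∈ Finset.Icc 1 (T - 1), m ((k : ℝ) / T) * w k *
        ((N : ℝ)⁻¹ * ∑ i ∈ Finset.Icc 1 N,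
          (cusum T (fun t => Y i t ω) ((k : ℝ) / T)) ^ 2)) :
    ∫ ω, σhat ω ∂P = (N : ℝ)⁻¹ * ∑ i ∈ Finset.Icc 1 N, σ2 i :=
  stmt15_general P N T μ σ2 e hindep hL2 hmean hvar Y hY w hw hw0 σhat hσhat
end
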